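/- arXiv:2505.08149 — 4 statements merged into one kernel-verified Lean document; each statement's English description precedes it below -/
import Mathlib

section
/- Let d ≥ 8, let μ_d be the partition of d with ⌊d/2⌋ parts equal to 2 and d − 2⌊d/2⌋ parts equal to 1, and let λ_d = (3, 1^{d−3}). Then μ_d does not majorize λ_d, and for every n ≥ 1 the inequality H_{n,μ_d}(x) ≥ H_{n,λ_d}(x) holds for all x ∈ [0,∞)^n. -/
/-- The complete homogeneous symmetric polynomial `h_{n,k}`, as a function on `ℝ^n`:
the sum of all monomials of total degree `k` in `x 0, …, x (n-1)` (with `h_{n,0} = 1`). -/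
noncomputable def hsym (n k : ℕ) (x : Fin n → ℝ) : ℝ :=
  ∑ d ∈ Finset.Nat.antidiagonalTuple n k, ∏ i, x i ^ d i

/-- `H_{n,λ}`: the term-normalized complete homogeneous symmetric function associated to
a partition given as a list of parts. -/
noncomputable def Hsym (n : ℕ) (lam : List ℕ) (x : Fin n → ℝ) : ℝ :=
  (lam.map fun k => hsym n k x).prod /
    (lam.map fun k => ((n + k - 1).choose k : ℝ)).prod

/-- `mu` majorizes `lam`: every partial sum of `mu` is at least the corresponding
partial sum of `lam`. -/
def Majorizes (mu lam : List ℕ) : Prop :=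
  ∀ j : ℕ, (lam.take j).sum ≤ (mu.take j).sum

/-! Let `m` be the mean of `x` and `u ≥ 0` its standard deviation scaled by `1/√(n+1)`, so that
`H_{(1)} = m` and `H_{(2)} = m² + u²`. Centering `x` at `m` and bounding every deviation by the
root of the total squared deviation gives `H_{(3)} ≤ m³ + 3mu² + 2u³`, and
`(m³ + 3mu² + 2u³) m⁵ ≤ (m² + u²)⁴` is a sum of squares. As `H_{λ_d} = H_{(3)} H_{(1)}^{d-3}` and
`H_{μ_d} = H_{(2)}^{⌊d/2⌋} H_{(1)}^{d mod 2}`, this together with `H_{(1)}² ≤ H_{(2)}` suffices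
once `⌊d/2⌋ ≥ 4`. -/

open Finset

lemma hsym_succ (n k : ℕ) (x : Fin (n + 1) → ℝ) :
    hsym (n + 1) k x = ∑ p ∈ antidiagonal k, x 0 ^ p.1 * hsym n p.2 fun i => x i.succ := by
  simp only [hsym, Finset.Nat.antidiagonalTuple, sum_mk, Multiset.Nat.antidiagonalTuple,
    Multiset.map_coe, Multiset.sum_coe, List.Nat.antidiagonalTuple, List.flatMap,
    List.map_flatten, List.sum_flatten, List.map_map]
  rw [sum_eq_multiset_sum]
  congr 1
  simp only [Function.comp_def, List.map_map, Fin.prod_univ_succ, Fin.cons_zero, Fin.cons_succ,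
    List.sum_map_mul_left]

lemma hsym_zero (n : ℕ) (x : Fin n → ℝ) : hsym n 0 x = 1 := by
  simp [hsym, Finset.Nat.antidiagonalTuple_zero_right]

lemma hsym_one (n : ℕ) (x : Fin n → ℝ) : hsym n 1 x = ∑ i, x i := by
  induction n with
  | zero => simp [hsym, Finset.Nat.antidiagonalTuple_zero_succ]
  | succ n ih =>
    simp only [hsym_succ, Finset.Nat.sum_antidiagonal_succ, Finset.Nat.antidiagonal_zero,
      sum_singleton, zero_add, hsym_zero, ih, Fin.sum_univ_succ]
    ring

lemma two_mul_hsym_two (n : ℕ) (x : Fin n → ℝ) :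
    2 * hsym n 2 x = (∑ i, x i) ^ 2 + ∑ i, x i ^ 2 := by
  induction n with
  | zero => simp [hsym, Finset.Nat.antidiagonalTuple_zero_succ]
  | succ n ih =>
    specialize ih fun i => x i.succ
    simp only [hsym_succ, Finset.Nat.sum_antidiagonal_succ, Finset.Nat.antidiagonal_zero,
      sum_singleton, zero_add, hsym_zero, hsym_one, Fin.sum_univ_succ]
    linear_combination ih

lemma six_mul_hsym_three (n : ℕ) (x : Fin n → ℝ) :
    6 * hsym n 3 x =
      (∑ i, x i) ^ 3 + 3 * (∑ i, x i) * ∑ i, x i ^ 2 + 2 * ∑ i, x i ^ 3 := by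
  induction n with
  | zero => simp [hsym, Finset.Nat.antidiagonalTuple_zero_succ]
  | succ n ih =>
    specialize ih fun i => x i.succ
    have h2 := two_mul_hsym_two n fun i => x i.succ
    simp only [hsym_succ, Finset.Nat.sum_antidiagonal_succ, Finset.Nat.antidiagonal_zero,
      sum_singleton, zero_add, hsym_zero, hsym_one, Fin.sum_univ_succ]
    linear_combination ih + 3 * x 0 * h2

lemma Hsym_append (n : ℕ) (l₁ l₂ : List ℕ) (x : Fin n → ℝ) :
    Hsym n (l₁ ++ l₂) x = Hsym n l₁ x * Hsym n l₂ x := by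
  simp [Hsym, mul_div_mul_comm]

lemma Hsym_cons (n k : ℕ) (lam : List ℕ) (x : Fin n → ℝ) :
    Hsym n (k :: lam) x = Hsym n [k] x * Hsym n lam x :=
  Hsym_append n [k] lam x

lemma Hsym_replicate (n m k : ℕ) (x : Fin n → ℝ) :
    Hsym n (List.replicate m k) x = Hsym n [k] x ^ m := by
  simp [Hsym, div_pow]

lemma Hsym_singleton_one (n : ℕ) (x : Fin n → ℝ) : Hsym n [1] x = (∑ i, x i) / n := by
  simp [Hsym, hsym_one]

lemma Hsym_singleton_two (n : ℕ) (x : Fin n → ℝ) :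
    Hsym n [2] x = ((∑ i, x i) ^ 2 + ∑ i, x i ^ 2) / (n * (n + 1)) := by
  simp only [Hsym, List.map_cons, List.map_nil, List.prod_singleton, Nat.cast_choose_two]
  rw [div_div_eq_mul_div, mul_comm, two_mul_hsym_two]
  push_cast
  ring

lemma Hsym_singleton_three (n : ℕ) (x : Fin n → ℝ) :
    Hsym n [3] x = ((∑ i, x i) ^ 3 + 3 * (∑ i, x i) * (∑ i, x i ^ 2) + 2 * ∑ i, x i ^ 3) /
      (n * (n + 1) * (n + 2)) := by
  have hchoose : ((n + 2).choose 3 : ℝ) = n * (n + 1) * (n + 2) / 6 := by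
    have h : ((n + 2 : ℕ) : ℝ) * ((n + 1).choose 2 : ℕ) = ((n + 2).choose 3 : ℕ) * 3 := by
      exact_mod_cast Nat.add_one_mul_choose_eq (n + 1) 2
    rw [Nat.cast_choose_two] at h
    push_cast at h
    linear_combination -h / 3
  simp only [Hsym, List.map_cons, List.map_nil, List.prod_singleton,
    show n + 3 - 1 = n + 2 from rfl, hchoose]
  rw [div_div_eq_mul_div, mul_comm, six_mul_hsym_three]

section CenteredMoments

variable {ι : Type*}

lemma sum_sq_eq_sum_sub_sq_add (s : Finset ι) (f : ι → ℝ) {m : ℝ} (hm : ∑ i ∈ s, f i = #s * m) :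
    ∑ i ∈ s, f i ^ 2 = ∑ i ∈ s, (f i - m) ^ 2 + #s * m ^ 2 := by
  calc ∑ i ∈ s, f i ^ 2 = ∑ i ∈ s, ((f i - m) ^ 2 + 2 * m * f i - m ^ 2) :=
        sum_congr rfl fun i _ => by ring
    _ = _ := by
        rw [sum_sub_distrib, sum_add_distrib, ← mul_sum, hm, sum_const, nsmul_eq_mul]
        ring

lemma sum_cube_eq_sum_sub_cube_add (s : Finset ι) (f : ι → ℝ) {m : ℝ}
    (hm : ∑ i ∈ s, f i = #s * m) :
    ∑ i ∈ s, f i ^ 3 = ∑ i ∈ s, (f i - m) ^ 3 + 3 * m * ∑ i ∈ s, (f i - m) ^ 2 + #s * m ^ 3 := by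
  calc ∑ i ∈ s, f i ^ 3
        = ∑ i ∈ s, ((f i - m) ^ 3 + 3 * m * (f i - m) ^ 2 + 3 * m ^ 2 * f i - 2 * m ^ 3) :=
        sum_congr rfl fun i _ => by ring
    _ = _ := by
        rw [sum_sub_distrib, sum_add_distrib, sum_add_distrib, ← mul_sum, ← mul_sum, hm,
          sum_const, nsmul_eq_mul]
        ring

lemma sum_cube_le_sum_sq_mul (s : Finset ι) (f : ι → ℝ) {c : ℝ} (hc : 0 ≤ c)
    (h : ∑ i ∈ s, f i ^ 2 ≤ c ^ 2) : ∑ i ∈ s, f i ^ 3 ≤ (∑ i ∈ s, f i ^ 2) * c := by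
  rw [sum_mul]
  refine sum_le_sum fun i hi => ?_
  have hfi : f i ≤ c :=
    (abs_le_of_sq_le_sq' ((single_le_sum (fun j _ => sq_nonneg (f j)) hi).trans h) hc).2
  calc f i ^ 3 = f i ^ 2 * f i := by ring
    _ ≤ f i ^ 2 * c := mul_le_mul_of_nonneg_left hfi (sq_nonneg _)

end CenteredMoments

lemma mul_pow_five_le_sq_add_sq_pow_four (m u : ℝ) :
    (m ^ 3 + 3 * m * u ^ 2 + 2 * u ^ 3) * m ^ 5 ≤ (m ^ 2 + u ^ 2) ^ 4 := by
  rw [← sub_nonneg]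
  have h : (m ^ 2 + u ^ 2) ^ 4 - (m ^ 3 + 3 * m * u ^ 2 + 2 * u ^ 3) * m ^ 5 =
      (m ^ 2 * u) ^ 2 * ((m - u) ^ 2 + 5 * u ^ 2) + 4 * m ^ 2 * u ^ 6 + u ^ 8 := by ring
  rw [h]
  positivity

lemma mul_pow_le_of_sq_le (A B C : ℝ) (hA : 0 ≤ A) (hAB : A ^ 2 ≤ B) (hC : C * A ^ 5 ≤ B ^ 4)
    (k r : ℕ) : C * A ^ (2 * k + 5 + r) ≤ B ^ (k + 4) * A ^ r :=
  calc C * A ^ (2 * k + 5 + r) = C * A ^ 5 * (A ^ 2) ^ k * A ^ r := by ring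
    _ ≤ B ^ 4 * B ^ k * A ^ r := by gcongr
    _ = B ^ (k + 4) * A ^ r := by ring

lemma exists_Hsym_one_two_three (n : ℕ) (hn : 1 ≤ n) (x : Fin n → ℝ) (hx : ∀ i, 0 ≤ x i) :
    ∃ m u : ℝ, 0 ≤ m ∧ Hsym n [1] x = m ∧ Hsym n [2] x = m ^ 2 + u ^ 2 ∧
      Hsym n [3] x ≤ m ^ 3 + 3 * m * u ^ 2 + 2 * u ^ 3 := by
  have hν : (0 : ℝ) < n := by exact_mod_cast hn
  obtain ⟨m, hm, hP⟩ : ∃ m : ℝ, 0 ≤ m ∧ ∑ i, x i = n * m :=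
    ⟨(∑ i, x i) / n, div_nonneg (sum_nonneg fun i _ => hx i) hν.le,
      (mul_div_cancel₀ _ hν.ne').symm⟩
  have hP' : ∑ i, x i = #(univ : Finset (Fin n)) * m := by rwa [card_univ, Fintype.card_fin]
  obtain ⟨u, hu, hVu⟩ : ∃ u : ℝ, 0 ≤ u ∧ ∑ i, (x i - m) ^ 2 = n * (n + 1) * u ^ 2 :=
    ⟨√((∑ i, (x i - m) ^ 2) / (n * (n + 1))), Real.sqrt_nonneg _, by
      rw [Real.sq_sqrt (div_nonneg (sum_nonneg fun i _ => sq_nonneg _) (by positivity))]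
      field_simp⟩
  have hT : ∑ i, (x i - m) ^ 3 ≤ (∑ i, (x i - m) ^ 2) * ((n + 2) * u) :=
    sum_cube_le_sum_sq_mul _ _ (by positivity) (by rw [hVu]; nlinarith [sq_nonneg u])
  have hQ := sum_sq_eq_sum_sub_sq_add univ x hP'
  have hR := sum_cube_eq_sum_sub_cube_add univ x hP'
  simp only [card_univ, Fintype.card_fin, hVu] at hQ hR hT
  refine ⟨m, u, hm, ?_, ?_, ?_⟩
  · rw [Hsym_singleton_one, hP]
    field_simp
  · rw [Hsym_singleton_two, hP, hQ]
    field_simp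
    ring
  · rw [Hsym_singleton_three, hP, hQ, hR, div_le_iff₀ (by positivity)]
    linear_combination 2 * hT

/-- For `d ≥ 8`, with `μ_d = (2^⌊d/2⌋, 1^{d−2⌊d/2⌋})` and `λ_d = (3, 1^{d−3})`, the
partition `μ_d` does not majorize `λ_d`, yet `H_{n,μ_d} ≥ H_{n,λ_d}` pointwise on
`[0,∞)^n` for every `n ≥ 1`. -/
theorem counterexample_partitions (d : ℕ) (hd : 8 ≤ d) :
    ¬ Majorizes (List.replicate (d / 2) 2 ++ List.replicate (d - 2 * (d / 2)) 1)
        (3 :: List.replicate (d - 3) 1) ∧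
      ∀ n : ℕ, 1 ≤ n → ∀ x : Fin n → ℝ, (∀ i, 0 ≤ x i) →
        Hsym n (3 :: List.replicate (d - 3) 1) x ≤
          Hsym n (List.replicate (d / 2) 2 ++ List.replicate (d - 2 * (d / 2)) 1) x := by
  obtain ⟨k, hk⟩ : ∃ k, d / 2 = k + 4 := ⟨d / 2 - 4, by omega⟩
  have hd3 : d - 3 = 2 * k + 5 + (d - 2 * (d / 2)) := by omega
  rw [hd3, hk]
  refine ⟨fun h => by simpa [List.replicate_succ] using h 1, fun n hn x hx => ?_⟩
  obtain ⟨m, u, hm, h1, h2, h3⟩ := exists_Hsym_one_two_three n hn x hx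
  rw [Hsym_cons, Hsym_append, Hsym_replicate, Hsym_replicate, Hsym_replicate, h1, h2]
  refine (mul_le_mul_of_nonneg_right h3 (pow_nonneg hm _)).trans ?_
  exact mul_pow_le_of_sq_le _ _ _ hm (le_add_of_nonneg_right (sq_nonneg u))
    (mul_pow_five_le_sq_add_sq_pow_four m u) _ _
end

section
/- For every n ≥ 1, every k ∈ ℕ, and every i ∈ {1,…,n}, the partial derivative of the complete homogeneous symmetric polynomial satisfies ∂h_{n,k}/∂x_i = Σ_{j=0}^{k−1} h_{n,j} · x_i^{k−1−j}. -/
/-- The complete homogeneous symmetric polynomial `h_{n,k}` as an element of the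
polynomial ring `ℝ[x_1,…,x_n]`: the sum of all monomials of total degree `k`
(with `h_{n,0} = 1`). -/
noncomputable def hsymPoly (n k : ℕ) : MvPolynomial (Fin n) ℝ :=
  ∑ d ∈ Finset.Nat.antidiagonalTuple n k, ∏ i, MvPolynomial.X i ^ d i

open MvPolynomial Finset

lemma prod_X_pow_univ {n : ℕ} (d : Fin n → ℕ) :
    (∏ j, (X j : MvPolynomial (Fin n) ℝ) ^ d j) =
      monomial (Finsupp.equivFunOnFinite.symm d) 1 := by
  rw [← prod_X_pow_eq_monomial]
  refine (Finset.prod_subset (Finset.subset_univ _) ?_).symm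
  intro x _ hx
  have : d x = 0 := by
    by_contra h
    exact hx (Finsupp.mem_support_iff.mpr (by simpa using h))
  simp [this]

lemma prod_X_pow_update {n : ℕ} (i : Fin n) (e : Fin n → ℕ) :
    (∏ j, (X j : MvPolynomial (Fin n) ℝ) ^ (Function.update e i (e i + 1)) j) =
      X i * ∏ j, (X j : MvPolynomial (Fin n) ℝ) ^ e j := by
  rw [Finset.prod_eq_mul_prod_sdiff_singleton_of_mem (Finset.mem_univ i)
      (fun j => (X j : MvPolynomial (Fin n) ℝ) ^ (Function.update e i (e i + 1)) j),
    Finset.prod_eq_mul_prod_sdiff_singleton_of_mem (Finset.mem_univ i)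
      (fun j => (X j : MvPolynomial (Fin n) ℝ) ^ e j)]
  rw [Finset.prod_congr rfl (fun j hj => by
    have hji : j ≠ i := by simpa using (Finset.mem_sdiff.mp hj).2
    rw [Function.update_of_ne hji])]
  rw [Function.update_self, pow_succ]
  ring

lemma hsym_succ_split {n : ℕ} (i : Fin n) (k : ℕ) :
    MvPolynomial.pderiv i (hsymPoly n (k + 1)) =
      hsymPoly n k + X i * MvPolynomial.pderiv i (hsymPoly n k) := by
  have hsplit : hsymPoly n (k + 1) =
      X i * hsymPoly n k +
        ∑ d ∈ (Finset.Nat.antidiagonalTuple n (k + 1)).filter (fun d => d i = 0),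
          ∏ j, (X j : MvPolynomial (Fin n) ℝ) ^ d j := by
    rw [hsymPoly, hsymPoly, ← Finset.sum_filter_add_sum_filter_not _ (fun d => d i ≠ 0)]
    simp only [not_not]
    congr 1
    rw [Finset.mul_sum]
    refine Finset.sum_nbij' (fun d => Function.update d i (d i - 1))
      (fun e => Function.update e i (e i + 1)) ?_ ?_ ?_ ?_ ?_
    · intro d hd
      simp only [Finset.mem_filter, Finset.Nat.mem_antidiagonalTuple] at hd
      rw [Finset.Nat.mem_antidiagonalTuple, Finset.sum_update_of_mem (Finset.mem_univ i)]
      have := hd.1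
      rw [Finset.sum_eq_add_sum_sdiff_singleton_of_mem (Finset.mem_univ i)] at this
      have h2 := hd.2
      omega
    · intro e he
      simp only [Finset.Nat.mem_antidiagonalTuple] at he
      simp only [Finset.mem_filter, Finset.Nat.mem_antidiagonalTuple]
      constructor
      · rw [Finset.sum_update_of_mem (Finset.mem_univ i)]
        rw [Finset.sum_eq_add_sum_sdiff_singleton_of_mem (Finset.mem_univ i)] at he
        omega
      · simp
    · intro d hd
      simp only [Finset.mem_filter] at hd
      have h2 := hd.2
      funext j
      rcases eq_or_ne j i with rfl | hji
      · simp; omega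
      · simp [Function.update_of_ne hji]
    · intro e _
      funext j
      rcases eq_or_ne j i with rfl | hji
      · simp
      · simp [Function.update_of_ne hji]
    · intro d hd
      simp only [Finset.mem_filter] at hd
      have h2 := hd.2
      have hfun : Function.update (Function.update d i (d i - 1)) i
          ((Function.update d i (d i - 1)) i + 1) = d := by
        funext j
        rcases eq_or_ne j i with rfl | hji
        · simp; omega
        · simp [Function.update_of_ne hji]
      rw [← prod_X_pow_update i (Function.update d i (d i - 1)), hfun]
  rw [hsplit, map_add, pderiv_mul, pderiv_X_self, one_mul, map_sum]
  have hzero : ∀ d ∈ (Finset.Nat.antidiagonalTuple n (k + 1)).filter (fun d => d i = 0),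
      MvPolynomial.pderiv i (∏ j, (X j : MvPolynomial (Fin n) ℝ) ^ d j) = 0 := by
    intro d hd
    simp only [Finset.mem_filter] at hd
    rw [prod_X_pow_univ, pderiv_monomial]
    have : (Finsupp.equivFunOnFinite.symm d) i = 0 := by simpa using hd.2
    simp [this]
  rw [Finset.sum_eq_zero hzero]
  ring

/-- `∂h_{n,k}/∂x_i = Σ_{j=0}^{k−1} h_{n,j} · x_i^{k−1−j}`. -/
theorem pderiv_hsymPoly (n : ℕ) (hn : 1 ≤ n) (k : ℕ) (i : Fin n) :
    MvPolynomial.pderiv i (hsymPoly n k) =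
      ∑ j ∈ Finset.range k, hsymPoly n j * MvPolynomial.X i ^ (k - 1 - j) := by
  induction k with
  | zero =>
    have h0 : hsymPoly n 0 = 1 := by
      rw [hsymPoly, Finset.Nat.antidiagonalTuple_zero_right, Finset.sum_singleton]
      simp
    simp [h0]
  | succ k ih =>
    rw [hsym_succ_split, ih, Finset.sum_range_succ]
    have hlast : hsymPoly n k * MvPolynomial.X i ^ (k + 1 - 1 - k) = hsymPoly n k := by
      simp
    rw [hlast]
    rw [Finset.mul_sum]
    have : ∀ j ∈ Finset.range k,
        hsymPoly n j * MvPolynomial.X i ^ (k + 1 - 1 - j) =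
          MvPolynomial.X i * (hsymPoly n j * MvPolynomial.X i ^ (k - 1 - j)) := by
      intro j hj
      rw [Finset.mem_range] at hj
      have : k + 1 - 1 - j = (k - 1 - j) + 1 := by omega
      rw [this, pow_succ]
      ring
    rw [Finset.sum_congr rfl this]
    ring
end

section
/- For all real x_1, x_2, the polynomial identity J_2(x_1,x_2) = (x_1 − x_2)^2 · (1/10368) · (47(x_1^6 + x_2^6) + 120(x_1^5 x_2 + x_1 x_2^5) + 177(x_1^4 x_2^2 + x_1^2 x_2^4) + 176 x_1^3 x_2^3) holds, where J_2(x_1,x_2) = (h_{2,2}(x_1,x_2))^4 / 3^4 − h_{2,3}(x_1,x_2) · (x_1+x_2)^5 / (4 · 2^5). Consequently J_2(x_1,x_2) ≥ 0 for all x_1, x_2 ≥ 0. -/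
lemma hsym22 (x1 x2 : ℝ) : hsym 2 2 ![x1, x2] = x1 ^ 2 + x1 * x2 + x2 ^ 2 := by
  simp [hsym, Finset.Nat.antidiagonalTuple_two, Finset.sum_map,
    Finset.Nat.sum_antidiagonal_eq_sum_range_succ (fun i j => x1 ^ i * x2 ^ j),
    Finset.sum_range_succ, Fin.prod_univ_two]
  ring

lemma hsym23 (x1 x2 : ℝ) :
    hsym 2 3 ![x1, x2] = x1 ^ 3 + x1 ^ 2 * x2 + x1 * x2 ^ 2 + x2 ^ 3 := by
  simp [hsym, Finset.Nat.antidiagonalTuple_two, Finset.sum_map,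
    Finset.Nat.sum_antidiagonal_eq_sum_range_succ (fun i j => x1 ^ i * x2 ^ j),
    Finset.sum_range_succ, Fin.prod_univ_two]
  ring

/-- Factorization of `J_2 = H_{2,(2^4)} − H_{2,(3,1^5)}` and its consequent
nonnegativity on `[0,∞)^2`. -/
theorem J_two_factorization :
    (∀ x1 x2 : ℝ,
        (hsym 2 2 ![x1, x2]) ^ 4 / 3 ^ 4 -
            hsym 2 3 ![x1, x2] * (x1 + x2) ^ 5 / (4 * 2 ^ 5) =
          (x1 - x2) ^ 2 * (1 / 10368) *
            (47 * (x1 ^ 6 + x2 ^ 6) + 120 * (x1 ^ 5 * x2 + x1 * x2 ^ 5) +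
              177 * (x1 ^ 4 * x2 ^ 2 + x1 ^ 2 * x2 ^ 4) + 176 * x1 ^ 3 * x2 ^ 3)) ∧
      ∀ x1 x2 : ℝ, 0 ≤ x1 → 0 ≤ x2 →
        0 ≤ (hsym 2 2 ![x1, x2]) ^ 4 / 3 ^ 4 -
              hsym 2 3 ![x1, x2] * (x1 + x2) ^ 5 / (4 * 2 ^ 5) := by
  have key : ∀ x1 x2 : ℝ,
      (hsym 2 2 ![x1, x2]) ^ 4 / 3 ^ 4 -
          hsym 2 3 ![x1, x2] * (x1 + x2) ^ 5 / (4 * 2 ^ 5) =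
        (x1 - x2) ^ 2 * (1 / 10368) *
          (47 * (x1 ^ 6 + x2 ^ 6) + 120 * (x1 ^ 5 * x2 + x1 * x2 ^ 5) +
            177 * (x1 ^ 4 * x2 ^ 2 + x1 ^ 2 * x2 ^ 4) + 176 * x1 ^ 3 * x2 ^ 3) := by
    intro x1 x2
    rw [hsym22, hsym23]
    ring
  refine ⟨key, fun x1 x2 h1 h2 => ?_⟩
  rw [key]
  positivity
end

section
/- Let n ≥ 2, let p ∈ [0,∞)^{n−1}, and let q ∈ [0,∞)^n be obtained from p by appending a zero coordinate. With J_n(x) = (h_{n,2}(x))^4 / C(n+1,2)^4 − h_{n,3}(x)(h_{n,1}(x))^5 / (C(n+2,3) n^5) and J_{n−1} defined analogously in n−1 variables, one has C(n+2,3) · n^5 · J_n(q) − C(n+1,3) · (n−1)^5 · J_{n−1}(p) = (T(n) − T(n−1)) · (h_{n,2}(q))^4, where T(n) = C(n+2,3) n^5 / C(n+1,2)^4. In particular, C(n+2,3) · n^5 · J_n(q) ≥ C(n+1,3) · (n−1)^5 · J_{n−1}(p). -/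
/-- `J_n = H_{n,(2^4)} − H_{n,(3,1^5)}` as a function on `ℝ^n`. -/
noncomputable def Jfun (n : ℕ) (x : Fin n → ℝ) : ℝ :=
  (hsym n 2 x) ^ 4 / (((n + 1).choose 2 : ℝ)) ^ 4 -
    hsym n 3 x * (hsym n 1 x) ^ 5 / (((n + 2).choose 3 : ℝ) * (n : ℝ) ^ 5)

/-- `T(n) = C(n+2,3) · n^5 / C(n+1,2)^4`. -/
noncomputable def Tfun (n : ℕ) : ℝ :=
  ((n + 2).choose 3 : ℝ) * (n : ℝ) ^ 5 / (((n + 1).choose 2 : ℝ)) ^ 4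

lemma hsym_snoc (m k : ℕ) (y : Fin m → ℝ) :
    hsym (m + 1) k (Fin.snoc y 0) = hsym m k y := by
  unfold hsym
  rw [← Finset.sum_filter_add_sum_filter_not _ (fun d => d (Fin.last m) = 0)]
  have h2 : ∑ d ∈ Finset.filter (fun d => ¬ d (Fin.last m) = 0)
      (Finset.Nat.antidiagonalTuple (m + 1) k),
      ∏ i, (Fin.snoc y 0 : Fin (m+1) → ℝ) i ^ d i = 0 := by
    refine Finset.sum_eq_zero fun d hd => ?_
    rw [Finset.mem_filter] at hd
    rw [Fin.prod_univ_castSucc]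
    have : (Fin.snoc y 0 : Fin (m+1) → ℝ) (Fin.last m) = 0 := by simp
    rw [this, zero_pow hd.2, mul_zero]
  rw [h2, add_zero]
  refine Finset.sum_bij' (fun d _ => Fin.init d) (fun e _ => Fin.snoc e 0)
    ?_ ?_ ?_ ?_ ?_
  · intro d hd
    rw [Finset.mem_filter, Finset.Nat.mem_antidiagonalTuple] at hd
    rw [Finset.Nat.mem_antidiagonalTuple]
    have := hd.1
    rw [Fin.sum_univ_castSucc, hd.2, add_zero] at this
    exact this
  · intro e he
    rw [Finset.Nat.mem_antidiagonalTuple] at he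
    rw [Finset.mem_filter, Finset.Nat.mem_antidiagonalTuple]
    constructor
    · rw [Fin.sum_univ_castSucc]
      simp [he]
    · simp
  · intro d hd
    rw [Finset.mem_filter] at hd
    funext i
    rcases Fin.eq_castSucc_or_eq_last i with ⟨j, rfl⟩ | rfl
    · simp [Fin.init]
    · simp [hd.2]
  · intro e he
    funext i
    simp [Fin.init]
  · intro d hd
    rw [Finset.mem_filter] at hd
    rw [Fin.prod_univ_castSucc, hd.2, pow_zero, mul_one]
    refine Finset.prod_congr rfl fun i _ => ?_
    simp [Fin.init]

lemma cast_choose3 (k : ℕ) :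
    (((k + 2).choose 3 : ℕ) : ℝ) = (k + 2) * (k + 1) * k / 6 := by
  induction k with
  | zero => norm_num
  | succ k ih =>
    have : (k + 1 + 2).choose 3 = (k + 2).choose 2 + (k + 2).choose 3 :=
      Nat.choose_succ_succ (k + 2) 2
    rw [this]
    push_cast
    rw [ih, Nat.cast_choose_two]
    push_cast
    ring

lemma cast_choose2 (k : ℕ) :
    (((k + 1).choose 2 : ℕ) : ℝ) = (k + 1) * k / 2 := by
  rw [Nat.cast_choose_two]
  push_cast
  ring

set_option maxHeartbeats 1000000 in
/-- Boundary reduction: for `n ≥ 2`, `p ∈ [0,∞)^{n−1}`, and `q ∈ [0,∞)^n` obtained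
from `p` by appending a zero coordinate, one has
`C(n+2,3)·n^5·J_n(q) − C(n+1,3)·(n−1)^5·J_{n−1}(p) = (T(n) − T(n−1))·h_{n,2}(q)^4`,
and in particular `C(n+2,3)·n^5·J_n(q) ≥ C(n+1,3)·(n−1)^5·J_{n−1}(p)`. -/
theorem boundary_reduction (n : ℕ) (hn : 2 ≤ n)
    (p : Fin (n - 1) → ℝ) (hp : ∀ i, 0 ≤ p i)
    (q : Fin n → ℝ) (hq : ∀ i : Fin n, q i = if h : (i : ℕ) < n - 1 then p ⟨i, h⟩ else 0) :
    (((n + 2).choose 3 : ℝ) * (n : ℝ) ^ 5 * Jfun n q -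
          ((n + 1).choose 3 : ℝ) * ((n : ℝ) - 1) ^ 5 * Jfun (n - 1) p =
        (Tfun n - Tfun (n - 1)) * (hsym n 2 q) ^ 4) ∧
      ((n + 1).choose 3 : ℝ) * ((n : ℝ) - 1) ^ 5 * Jfun (n - 1) p ≤
        ((n + 2).choose 3 : ℝ) * (n : ℝ) ^ 5 * Jfun n q := by
  obtain ⟨m, rfl⟩ : ∃ m, n = m + 1 := ⟨n - 1, by omega⟩
  have hm : 1 ≤ m := by omega
  have hqs : q = Fin.snoc p 0 := by
    funext i
    rw [hq i]
    by_cases h : (i : ℕ) < m + 1 - 1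
    · rw [dif_pos h]
      simp only [Fin.snoc, Fin.castLT]
      rw [dif_pos (show (i : ℕ) < m from h)]
      rfl
    · rw [dif_neg h]
      simp only [Fin.snoc]
      rw [dif_neg (show ¬ (i : ℕ) < m from h)]
      simp
  subst hqs
  set a := hsym (m + 1 - 1) 2 p with ha
  set b := hsym (m + 1 - 1) 3 p with hb
  set c := hsym (m + 1 - 1) 1 p with hc
  have e2 : hsym (m + 1) 2 (Fin.snoc p 0) = a := hsym_snoc m 2 p
  have e3 : hsym (m + 1) 3 (Fin.snoc p 0) = b := hsym_snoc m 3 p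
  have e1 : hsym (m + 1) 1 (Fin.snoc p 0) = c := hsym_snoc m 1 p
  -- explicit choose values
  have hC1 : (((m + 1 + 1).choose 2 : ℕ) : ℝ) = ((m:ℝ) + 2) * ((m:ℝ) + 1) / 2 := by
    rw [cast_choose2]; push_cast; ring
  have hC2 : (((m + 1 + 2).choose 3 : ℕ) : ℝ) = ((m:ℝ) + 3) * ((m:ℝ) + 2) * ((m:ℝ) + 1) / 6 := by
    have h := cast_choose3 (m+1); push_cast at h; rw [h]; ring
  have hC3 : (((m + 1).choose 2 : ℕ) : ℝ) = ((m:ℝ) + 1) * (m:ℝ) / 2 :=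
    cast_choose2 m
  have hC4 : (((m + 2).choose 3 : ℕ) : ℝ) = ((m:ℝ) + 2) * ((m:ℝ) + 1) * (m:ℝ) / 6 :=
    cast_choose3 m
  have hm' : (1 : ℝ) ≤ (m : ℝ) := by exact_mod_cast hm
  have hmpos : (0 : ℝ) < (m : ℝ) := by linarith
  unfold Jfun Tfun
  rw [e1, e2, e3, ← ha, ← hb, ← hc]
  simp only [Nat.add_sub_cancel]
  rw [hC1, hC2, hC3, hC4]
  push_cast
  have key : ((m:ℝ) + 3) * ((m:ℝ) + 2) * ((m:ℝ) + 1) / 6 * ((m:ℝ) + 1) ^ 5 *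
        (a ^ 4 / (((m:ℝ) + 2) * ((m:ℝ) + 1) / 2) ^ 4 -
          b * c ^ 5 / (((m:ℝ) + 3) * ((m:ℝ) + 2) * ((m:ℝ) + 1) / 6 * ((m:ℝ) + 1) ^ 5)) -
      ((m:ℝ) + 2) * ((m:ℝ) + 1) * (m:ℝ) / 6 * ((m:ℝ) + 1 - 1) ^ 5 *
        (a ^ 4 / (((m:ℝ) + 1) * (m:ℝ) / 2) ^ 4 -
          b * c ^ 5 / (((m:ℝ) + 2) * ((m:ℝ) + 1) * (m:ℝ) / 6 * (m:ℝ) ^ 5)) =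
      (((m:ℝ) + 3) * ((m:ℝ) + 2) * ((m:ℝ) + 1) / 6 * ((m:ℝ) + 1) ^ 5 /
          (((m:ℝ) + 2) * ((m:ℝ) + 1) / 2) ^ 4 -
        ((m:ℝ) + 2) * ((m:ℝ) + 1) * (m:ℝ) / 6 * (m:ℝ) ^ 5 /
          (((m:ℝ) + 1) * (m:ℝ) / 2) ^ 4) * a ^ 4 := by
    have h1 : ((m:ℝ) + 1) ≠ 0 := by positivity
    have h2 : ((m:ℝ) + 2) ≠ 0 := by positivity
    have h3 : ((m:ℝ) + 3) ≠ 0 := by positivity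
    have h4 : (m:ℝ) ≠ 0 := ne_of_gt hmpos
    field_simp
    ring
  refine ⟨key, ?_⟩
  have hmono : ((m:ℝ) + 2) * ((m:ℝ) + 1) * (m:ℝ) / 6 * (m:ℝ) ^ 5 /
        (((m:ℝ) + 1) * (m:ℝ) / 2) ^ 4 ≤
      ((m:ℝ) + 3) * ((m:ℝ) + 2) * ((m:ℝ) + 1) / 6 * ((m:ℝ) + 1) ^ 5 /
        (((m:ℝ) + 2) * ((m:ℝ) + 1) / 2) ^ 4 := by
    set x := (m : ℝ) with hx
    rw [div_le_div_iff₀ (by positivity) (by positivity)]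
    have hstep : (x + 2) ^ 4 * x ^ 2 ≤ (x + 3) * (x + 1) ^ 5 := by
      nlinarith [hmpos.le, pow_nonneg hmpos.le 4, pow_nonneg hmpos.le 3, sq_nonneg x]
    have hfac : (0:ℝ) ≤ (x + 2) * (x + 1) ^ 5 * x ^ 4 / 96 := by positivity
    have := mul_le_mul_of_nonneg_right hstep hfac
    nlinarith [this]
  have h4nn : (0 : ℝ) ≤ a ^ 4 := by positivity
  linarith [key, mul_nonneg (sub_nonneg.2 hmono) h4nn]
end
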